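/- Let β > 0 and λ > 0, and let φ : (0,β] → [0,1] be a measurable function satisfying φ(x) = 1 − exp(−(x/β)·∫ y·φ(y) dμ̂(y)) for all x ∈ (0,β]. Then, setting c := (1/β)·∫ y·φ(y) dμ̂(y), one has φ(x) = 1 − e^{−cx} for all x ∈ (0,β], and c·G(c) = c. -/

import Mathlib

/-! Substituting the definition of `c` into the fixed-point equation gives the profile of `φ`.
Integrating `y (1 - e^{-cy})` against `μ̂` in closed form gives `β c G(c)`, while by definition
of `c` the same integral is `β c`; cancelling `β` gives `c G(c) = c`. Nonnegativity of `φ`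
gives `c ≥ 0`, which keeps `λ + c` away from the pole of `G`. -/

open Real MeasureTheory

noncomputable def muhat (β lam : ℝ) : Measure ℝ :=
  (ENNReal.ofReal ((lam * β + 1) * exp (-(lam * β)))) • Measure.dirac β
    + (volume.restrict (Set.Ioo 0 β)).withDensity
        (fun x => ENNReal.ofReal (β * lam ^ 2 * exp (-(lam * x))))

open Set

theorem ae_mem_Ioc_muhat {β : ℝ} (hβ : 0 < β) (lam : ℝ) : ∀ᵐ y ∂muhat β lam, y ∈ Ioc 0 β := by
  rw [muhat, ae_add_measure_iff]
  refine ⟨Measure.ae_smul_measure ((ae_dirac_iff measurableSet_Ioc).2 ⟨hβ, le_rfl⟩) _, ?_⟩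
  refine (withDensity_absolutelyContinuous _ _).ae_le ?_
  filter_upwards [ae_restrict_mem measurableSet_Ioo] with y hy using Ioo_subset_Ioc_self hy

theorem integral_restrict_withDensity_ofReal {α : Type*} [MeasurableSpace α] {μ : Measure α}
    {s : Set α} (hs : MeasurableSet s) {d : α → ℝ} (hd : Measurable d) (hd0 : ∀ x ∈ s, 0 ≤ d x)
    (g : α → ℝ) :
    ∫ x, g x ∂(μ.restrict s).withDensity (fun x => ENNReal.ofReal (d x))
      = ∫ x in s, d x * g x ∂μ := by
  rw [integral_withDensity_eq_integral_toReal_smul hd.ennreal_ofReal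
    (ae_of_all _ fun _ => ENNReal.ofReal_lt_top)]
  exact setIntegral_congr_fun hs fun x hx => by rw [ENNReal.toReal_ofReal (hd0 x hx), smul_eq_mul]

theorem integral_muhat {β lam : ℝ} (hβ : 0 ≤ β) (hlam : 0 ≤ lam) {f : ℝ → ℝ}
    (hf : Continuous f) :
    ∫ y, f y ∂muhat β lam = (lam * β + 1) * exp (-(lam * β)) * f β
      + ∫ y in 0..β, β * lam ^ 2 * exp (-(lam * y)) * f y := by
  set d : ℝ → ℝ := fun y => β * lam ^ 2 * exp (-(lam * y))
  have hd : Continuous d := by fun_prop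
  have hd_toReal (y : ℝ) : (ENNReal.ofReal (d y)).toReal = d y :=
    ENNReal.toReal_ofReal (by positivity)
  have hint : Integrable f ((volume.restrict (Ioo 0 β)).withDensity
      fun y => ENNReal.ofReal (d y)) := by
    rw [integrable_withDensity_iff_integrable_smul' hd.measurable.ennreal_ofReal
      (ae_of_all _ fun _ => ENNReal.ofReal_lt_top)]
    simp only [hd_toReal]
    exact ((hd.smul hf).integrableOn_Icc).mono_set Ioo_subset_Icc_self
  rw [muhat, integral_add_measure
      ((integrable_dirac (by simp)).smul_measure ENNReal.ofReal_ne_top) hint,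
    integral_smul_measure, integral_dirac,
    integral_restrict_withDensity_ofReal measurableSet_Ioo hd.measurable
      (fun y _ => by positivity),
    intervalIntegral.integral_of_le hβ, integral_Ioc_eq_integral_Ioo,
    ENNReal.toReal_ofReal (by positivity), smul_eq_mul]

theorem integral_mul_exp_neg_mul {t : ℝ} (ht : t ≠ 0) (b : ℝ) :
    ∫ x in 0..b, x * exp (-(t * x)) = (1 - (1 + t * b) * exp (-(t * b))) / t ^ 2 := by
  have hderiv (x : ℝ) : HasDerivAt (fun x => -((1 + t * x) / t ^ 2 * exp (-(t * x))))
      (x * exp (-(t * x))) x := by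
    have hexp := ((hasDerivAt_id' x).const_mul t).neg.exp
    have hpoly := (((hasDerivAt_id' x).const_mul t).const_add 1).div_const (t ^ 2)
    exact (hpoly.mul hexp).neg.congr_deriv (by simp only [Pi.neg_apply]; field_simp; ring)
  rw [intervalIntegral.integral_eq_sub_of_hasDerivAt (fun x _ => hderiv x)
    (Continuous.intervalIntegrable (by fun_prop) 0 b)]
  simp only [mul_zero, neg_zero, exp_zero, add_zero]
  ring

theorem integral_muhat_mul_one_sub_exp {β lam c : ℝ} (hβ : 0 ≤ β) (hlam : 0 < lam)
    (hlc : lam + c ≠ 0) :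
    ∫ y, y * (1 - exp (-(c * y))) ∂muhat β lam
      = β * c * ((2 * lam + c) / (lam + c) ^ 2 * (1 - exp (-((lam + c) * β)))
          - lam * β / (lam + c) * exp (-((lam + c) * β))) := by
  have hsplit : (fun y => β * lam ^ 2 * exp (-(lam * y)) * (y * (1 - exp (-(c * y)))))
      = fun y => β * lam ^ 2 * (y * exp (-(lam * y)) - y * exp (-((lam + c) * y))) := by
    funext y
    rw [show -((lam + c) * y) = -(lam * y) + -(c * y) by ring, exp_add]
    ring
  rw [integral_muhat hβ hlam.le (by fun_prop), hsplit, intervalIntegral.integral_const_mul,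
    intervalIntegral.integral_sub (Continuous.intervalIntegrable (by fun_prop) 0 β)
      (Continuous.intervalIntegrable (by fun_prop) 0 β),
    integral_mul_exp_neg_mul hlam.ne', integral_mul_exp_neg_mul hlc,
    show -((lam + c) * β) = -(lam * β) + -(c * β) by ring, exp_add]
  field_simp
  ring

theorem stmt_10_general (β lam : ℝ) (hβ : 0 < β) (hlam : 0 < lam)
    (G : ℝ → ℝ)
    (hG : ∀ g : ℝ, G g = (2 * lam + g) / (lam + g) ^ 2 * (1 - exp (-((lam + g) * β)))
      - lam * β / (lam + g) * exp (-((lam + g) * β)))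
    (φ : ℝ → ℝ)
    (hφ01 : ∀ x ∈ Set.Ioc (0:ℝ) β, φ x ∈ Set.Icc (0:ℝ) 1)
    (hfix : ∀ x ∈ Set.Ioc (0:ℝ) β,
      φ x = 1 - exp (-((x / β) * ∫ y, y * φ y ∂(muhat β lam))))
    (c : ℝ) (hc : c = (1 / β) * ∫ y, y * φ y ∂(muhat β lam)) :
    (∀ x ∈ Set.Ioc (0:ℝ) β, φ x = 1 - exp (-(c * x))) ∧ c * G c = c := by
  set I := ∫ y, y * φ y ∂(muhat β lam)
  have hIc : I = β * c := by
    rw [hc]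
    field_simp
  have hφ : ∀ x ∈ Ioc 0 β, φ x = 1 - exp (-(c * x)) := fun x hx => by
    rw [hfix x hx, hIc]
    field_simp
  have hae := ae_mem_Ioc_muhat hβ lam
  have hc0 : 0 ≤ c := by
    rw [hc]
    exact mul_nonneg (by positivity)
      (integral_nonneg_of_ae (hae.mono fun y hy => mul_nonneg hy.1.le (hφ01 y hy).1))
  have hIG : I = β * c * G c := by
    rw [hG, ← integral_muhat_mul_one_sub_exp hβ.le hlam (by positivity)]
    exact integral_congr_ae (hae.mono fun y hy => congrArg (y * ·) (hφ y hy))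
  refine ⟨hφ, mul_left_cancel₀ hβ.ne' ?_⟩
  linear_combination hIG.symm.trans hIc

/-- For `β > 0` and `λ > 0`, if `φ : (0,β] → [0,1]` is measurable and satisfies
`φ(x) = 1 − exp(−(x/β)·∫ y·φ(y) dμ̂(y))` for all `x ∈ (0,β]`, then with
`c := (1/β)·∫ y·φ(y) dμ̂(y)` one has `φ(x) = 1 − e^{−cx}` on `(0,β]` and `c·G(c) = c`. -/
theorem stmt_10 (β lam : ℝ) (hβ : 0 < β) (hlam : 0 < lam)
    (G : ℝ → ℝ)
    (hG : ∀ g : ℝ, G g = (2 * lam + g) / (lam + g) ^ 2 * (1 - exp (-((lam + g) * β)))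
      - lam * β / (lam + g) * exp (-((lam + g) * β)))
    (φ : ℝ → ℝ) (hφmeas : Measurable φ)
    (hφ01 : ∀ x ∈ Set.Ioc (0:ℝ) β, φ x ∈ Set.Icc (0:ℝ) 1)
    (hfix : ∀ x ∈ Set.Ioc (0:ℝ) β,
      φ x = 1 - exp (-((x / β) * ∫ y, y * φ y ∂(muhat β lam))))
    (c : ℝ) (hc : c = (1 / β) * ∫ y, y * φ y ∂(muhat β lam)) :
    (∀ x ∈ Set.Ioc (0:ℝ) β, φ x = 1 - exp (-(c * x))) ∧ c * G c = c :=
  stmt_10_general β lam hβ hlam G hG φ hφ01 hfix c hc
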